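/- arXiv:math/0402431 — 5 statements merged into one kernel-verified Lean document; each statement's English description precedes it below -/
import Mathlib

section
/- Let $x, y, z$ be unit vectors in a complex inner product space such that $2|\langle x, z\rangle|^2 \ge 1$. Then $(2|\langle x,z\rangle|^2 - 1)(2|\langle y,z\rangle|^2 - 1) \le |\langle x,y\rangle|^2$. -/
/-!
Write `cos α = |⟪x, y⟫|`, `cos β = |⟪x, z⟫|`, `cos γ = |⟪y, z⟫|` with angles in `[0, π/2]`.
Removing the `z`-components `u = x - ⟪z, x⟫ z`, `v = y - ⟪z, y⟫ z` gives
`⟪u, v⟫ = ⟪x, y⟫ - ⟪x, z⟫ ⟪z, y⟫`, `‖u‖ = sin β`, `‖v‖ = sin γ`, so Cauchy–Schwarz yields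
`cos (β + γ) ≤ cos α`, i.e. `α ≤ β + γ`. If `cos 2γ ≤ 0` the claim is trivial, since
`cos 2β ≥ 0`; otherwise `β + γ ≤ π/2`, hence `cos² α ≥ cos² (β + γ)`, and
`cos² (β + γ) - cos 2β cos 2γ = sin² (β - γ) ≥ 0`.
-/

open scoped InnerProductSpace

section
variable {𝕜 E : Type*} [RCLike 𝕜] [NormedAddCommGroup E] [InnerProductSpace 𝕜 E]
  {z : E}

theorem inner_sub_inner_smul_sub_inner_smul (hz : ‖z‖ = 1) (x y : E) :
    ⟪x - ⟪z, x⟫_𝕜 • z, y - ⟪z, y⟫_𝕜 • z⟫_𝕜 = ⟪x, y⟫_𝕜 - ⟪x, z⟫_𝕜 * ⟪z, y⟫_𝕜 := by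
  have hzz : ⟪z, z⟫_𝕜 = 1 := by simp [inner_self_eq_norm_sq_to_K, hz]
  simp only [inner_sub_left, inner_sub_right, inner_smul_left, inner_smul_right,
    inner_conj_symm, hzz]
  ring

theorem norm_inner_sq_add_norm_sub_inner_smul_sq (hz : ‖z‖ = 1) (x : E) :
    ‖⟪x, z⟫_𝕜‖ ^ 2 + ‖x - ⟪z, x⟫_𝕜 • z‖ ^ 2 = ‖x‖ ^ 2 := by
  have h := inner_sub_inner_smul_sub_inner_smul (𝕜 := 𝕜) hz x x
  rw [inner_self_eq_norm_sq_to_K, inner_self_eq_norm_sq_to_K, ← inner_conj_symm x z,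
    RCLike.conj_mul, norm_inner_symm] at h
  have : ‖x - ⟪z, x⟫_𝕜 • z‖ ^ 2 = ‖x‖ ^ 2 - ‖⟪x, z⟫_𝕜‖ ^ 2 := by exact_mod_cast h
  linarith

theorem norm_inner_mul_norm_inner_sub_norm_inner_le (hz : ‖z‖ = 1) (x y : E) :
    ‖⟪x, z⟫_𝕜‖ * ‖⟪y, z⟫_𝕜‖ - ‖⟪x, y⟫_𝕜‖ ≤ ‖x - ⟪z, x⟫_𝕜 • z‖ * ‖y - ⟪z, y⟫_𝕜 • z‖ :=
  calc ‖⟪x, z⟫_𝕜‖ * ‖⟪y, z⟫_𝕜‖ - ‖⟪x, y⟫_𝕜‖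
      = ‖⟪x, z⟫_𝕜 * ⟪z, y⟫_𝕜‖ - ‖⟪x, y⟫_𝕜‖ := by rw [norm_mul, norm_inner_symm z y]
    _ ≤ ‖⟪x, y⟫_𝕜 - ⟪x, z⟫_𝕜 * ⟪z, y⟫_𝕜‖ := by
      rw [norm_sub_rev]; exact norm_sub_norm_le _ _
    _ = ‖⟪x - ⟪z, x⟫_𝕜 • z, y - ⟪z, y⟫_𝕜 • z⟫_𝕜‖ := by
      rw [inner_sub_inner_smul_sub_inner_smul hz]
    _ ≤ _ := norm_inner_le_norm _ _

end

theorem two_mul_sq_sub_one_mul_le_sq {a b c s t : ℝ} (hb : 0 ≤ b) (hc : 0 ≤ c)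
    (hbs : b ^ 2 + s ^ 2 = 1) (hct : c ^ 2 + t ^ 2 = 1) (hb2 : 1 ≤ 2 * b ^ 2)
    (h : b * c - s * t ≤ a) :
    (2 * b ^ 2 - 1) * (2 * c ^ 2 - 1) ≤ a ^ 2 := by
  rcases le_or_gt (2 * c ^ 2) 1 with hc2 | hc2
  · nlinarith [mul_nonpos_of_nonneg_of_nonpos (sub_nonneg.2 hb2) (sub_nonpos.2 hc2)]
  · have hst : s * t ≤ b * c := by
      refine abs_le_of_sq_le_sq' ?_ (mul_nonneg hb hc) |>.2
      nlinarith
    calc (2 * b ^ 2 - 1) * (2 * c ^ 2 - 1)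
        = (b * c - s * t) ^ 2 - (b * t - c * s) ^ 2 := by
          linear_combination (2 * c ^ 2 - 1) * hbs + (b ^ 2 - s ^ 2) * hct
      _ ≤ (b * c - s * t) ^ 2 := sub_le_self _ (sq_nonneg _)
      _ ≤ a ^ 2 := pow_le_pow_left₀ (by linarith) h 2

/-- For unit vectors `x, y, z` in a complex inner product space with
`2|⟨x,z⟩|² ≥ 1`, we have `(2|⟨x,z⟩|² - 1)(2|⟨y,z⟩|² - 1) ≤ |⟨x,y⟩|²`. -/
theorem unit_vectors_inner_ineq {E : Type*} [NormedAddCommGroup E]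
    [InnerProductSpace ℂ E] (x y z : E)
    (hx : ‖x‖ = 1) (hy : ‖y‖ = 1) (hz : ‖z‖ = 1)
    (h : 1 ≤ 2 * ‖(inner ℂ x z : ℂ)‖ ^ 2) :
    (2 * ‖(inner ℂ x z : ℂ)‖ ^ 2 - 1) * (2 * ‖(inner ℂ y z : ℂ)‖ ^ 2 - 1)
      ≤ ‖(inner ℂ x y : ℂ)‖ ^ 2 := by
  have hxz := norm_inner_sq_add_norm_sub_inner_smul_sq (𝕜 := ℂ) hz x
  have hyz := norm_inner_sq_add_norm_sub_inner_smul_sq (𝕜 := ℂ) hz y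
  rw [hx, one_pow] at hxz
  rw [hy, one_pow] at hyz
  exact two_mul_sq_sub_one_mul_le_sq (norm_nonneg _) (norm_nonneg _) hxz hyz h
    (sub_le_comm.1 (norm_inner_mul_norm_inner_sub_norm_inner_le hz x y))
end

section
/- Let $(\tau_m)_{m \ge 0}$ with $\tau_0 = 0$ be an increasing sequence of stopping times with values in $\{1,\dots,n\} \cup \{\infty\}$ on a filtered probability space. For any $\theta \in (0,1)$ and $m \ge 1$, the probability of the event that $\tau_m \le n$ and $\mathbb{E}[\exp(-(\tau_{l+1}-\tau_l)/n) \mid \mathcal{F}_{\tau_l}] \le \theta$ for all $l = 0, 1, \dots, m-1$, is at most $e \cdot \theta^m$. -/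
/-!
Write `X l = exp(-(τ (l+1) - τ l)/n) ∈ [0, 1]`, which is `𝓕_{τ (l+1)}`-measurable, and let `C k`
be the event that `E[X l | 𝓕_{τ l}] ≤ θ` for all `l < k`. Since `C (k+1)` and `∏_{l<k} X l` are
`𝓕_{τ k}`-measurable, pulling them out of the conditional expectation of `X k` gives
`E[1_{C (k+1)} ∏_{l≤k} X l] ≤ θ E[1_{C k} ∏_{l<k} X l]`, hence `E[1_{C m} ∏_{l<m} X l] ≤ θ^m`.
The product telescopes to at least `exp(-τ m/n)`, which is `≥ e⁻¹` on `{τ m ≤ n}`; Markov's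
inequality concludes.
-/

open MeasureTheory ProbabilityTheory

/-- `exp(-d/n)`, with the convention `exp(-∞/n) = 0`. -/
noncomputable def expNegDiv (n : ℕ) (d : ℕ∞) : ℝ :=
  WithTop.recTopCoe 0 (fun k : ℕ => Real.exp (-(k : ℝ) / n)) d

open Finset

@[simp] lemma expNegDiv_top (n : ℕ) : expNegDiv n ⊤ = 0 := rfl

@[simp] lemma expNegDiv_coe (n k : ℕ) : expNegDiv n k = Real.exp (-(k : ℝ) / n) := rfl

lemma expNegDiv_add (n : ℕ) (a b : ℕ∞) :
    expNegDiv n (a + b) = expNegDiv n a * expNegDiv n b := by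
  cases a with
  | top => simp
  | coe a =>
    cases b with
    | top => simp
    | coe b =>
      rw [← Nat.cast_add, expNegDiv_coe, expNegDiv_coe, expNegDiv_coe, ← Real.exp_add]
      push_cast
      ring_nf

lemma expNegDiv_mem_unitInterval (n : ℕ) (d : ℕ∞) : expNegDiv n d ∈ unitInterval := by
  cases d with
  | top => simp
  | coe k =>
    refine ⟨(Real.exp_pos _).le, Real.exp_le_one_iff.mpr ?_⟩
    exact div_nonpos_of_nonpos_of_nonneg (neg_nonpos.mpr k.cast_nonneg) n.cast_nonneg

lemma exp_neg_one_le_expNegDiv {n : ℕ} {d : ℕ∞} (hd : d ≤ n) :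
    Real.exp (-1) ≤ expNegDiv n d := by
  lift d to ℕ using ne_top_of_le_ne_top (ENat.natCast_ne_top n) hd
  refine Real.exp_le_exp.mpr ?_
  rw [neg_div, neg_le_neg_iff]
  exact div_le_one_of_le₀ (by exact_mod_cast hd) n.cast_nonneg

lemma expNegDiv_eq_mul_prod_of_monotone (n : ℕ) {t : ℕ → ℕ∞} (ht : Monotone t) (k : ℕ) :
    expNegDiv n (t k) = expNegDiv n (t 0) * ∏ l ∈ range k, expNegDiv n (t (l + 1) - t l) := by
  induction k with
  | zero => simp
  | succ k ih =>
    rw [prod_range_succ, ← mul_assoc, ← ih, ← expNegDiv_add, add_tsub_cancel_of_le (ht k.le_succ)]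

namespace MeasureTheory

variable {Ω : Type*} {m0 : MeasurableSpace Ω}

def Filtration.ofStoppingTimes {ι : Type*} [Preorder ι] {𝓕 : Filtration ι m0}
    {τ : ℕ → Ω → WithTop ι} (hτ : ∀ m, IsStoppingTime 𝓕 (τ m))
    (hmono : ∀ m ω, τ m ω ≤ τ (m + 1) ω) : Filtration ℕ m0 where
  seq l := (hτ l).measurableSpace
  mono' _ _ hkl := (hτ _).measurableSpace_mono (hτ _)
    fun ω => monotone_nat_of_le_succ (fun l => hmono l ω) hkl
  le' l := (hτ l).measurableSpace_le

lemma IsStoppingTime.measurable_of_countable {ι : Type*} [LinearOrder ι] [Countable ι]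
    [MeasurableSpace ι] {𝓕 : Filtration ι m0} {τ : Ω → ι}
    (hτ : IsStoppingTime 𝓕 fun ω => (τ ω : WithTop ι)) :
    Measurable[hτ.measurableSpace] τ :=
  @measurable_to_countable' ι Ω _ _ hτ.measurableSpace τ fun i => by
    have h := hτ.measurableSet_eq_of_countable' i
    simp only [WithTop.coe_inj] at h
    exact h

variable {μ : Measure Ω}

lemma integral_mul_le_of_condExp_le {m : MeasurableSpace Ω} (hm : m ≤ m0)
    [SigmaFinite (μ.trim hm)] {g X : Ω → ℝ} {θ : ℝ} (hg : StronglyMeasurable[m] g)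
    (hg0 : ∀ ω, 0 ≤ g ω) (hg_int : Integrable g μ) (hgX : Integrable (g * X) μ)
    (hX : Integrable X μ) (hθ : ∀ ω, g ω ≠ 0 → μ[X | m] ω ≤ θ) :
    ∫ ω, (g * X) ω ∂μ ≤ θ * ∫ ω, g ω ∂μ := by
  have hpull : μ[g * X | m] =ᵐ[μ] g * μ[X | m] := condExp_mul_of_stronglyMeasurable_left hg hgX hX
  have hle : ∀ ω, (g * μ[X | m]) ω ≤ θ * g ω := fun ω => by
    rcases eq_or_ne (g ω) 0 with h | h
    · simp [h]
    · rw [mul_comm θ]; exact mul_le_mul_of_nonneg_left (hθ ω h) (hg0 ω)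
  calc ∫ ω, (g * X) ω ∂μ = ∫ ω, (g * μ[X | m]) ω ∂μ := by
        rw [← integral_condExp hm, integral_congr_ae hpull]
    _ ≤ ∫ ω, θ * g ω ∂μ :=
        integral_mono (integrable_condExp.congr hpull) (hg_int.const_mul θ) hle
    _ = θ * ∫ ω, g ω ∂μ := integral_const_mul θ _

lemma measurableSet_setOf_forall_condExp_le (G : Filtration ℕ m0) (X : ℕ → Ω → ℝ) (θ : ℝ)
    {k j : ℕ} (hkj : k ≤ j + 1) : MeasurableSet[G j] {ω | ∀ l < k, μ[X l | G l] ω ≤ θ} := by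
  have h : {ω | ∀ l < k, μ[X l | G l] ω ≤ θ} = ⋂ l ∈ range k, {ω | μ[X l | G l] ω ≤ θ} := by
    ext; simp
  rw [h]
  refine Finset.measurableSet_biInter _ fun l hl => G.mono (i := l) ?_ _ ?_
  · have := mem_range.mp hl; omega
  · exact measurableSet_le stronglyMeasurable_condExp.measurable measurable_const

lemma integrable_of_mem_unitInterval [IsFiniteMeasure μ] {f : Ω → ℝ}
    (hf : AEStronglyMeasurable f μ) (h01 : ∀ ω, f ω ∈ unitInterval) : Integrable f μ :=
  .of_bound hf 1 <| ae_of_all _ fun ω => by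
    rw [Real.norm_of_nonneg (h01 ω).1]; exact (h01 ω).2

lemma indicator_mem_unitInterval {s : Set Ω} {f : Ω → ℝ} (h01 : ∀ ω, f ω ∈ unitInterval)
    (ω : Ω) : s.indicator f ω ∈ unitInterval := by
  by_cases hω : ω ∈ s
  · simpa [hω] using h01 ω
  · simp [hω]

lemma stronglyMeasurable_prod_range (G : Filtration ℕ m0) {X : ℕ → Ω → ℝ}
    (hX : ∀ l, StronglyMeasurable[G (l + 1)] (X l)) (k : ℕ) :
    StronglyMeasurable[G k] fun ω => ∏ l ∈ range k, X l ω :=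
  Finset.stronglyMeasurable_fun_prod _ fun l hl => (hX l).mono (G.mono (mem_range.mp hl))

theorem integral_indicator_prod_le_pow [IsProbabilityMeasure μ] (G : Filtration ℕ m0)
    {X : ℕ → Ω → ℝ} (hX : ∀ l, StronglyMeasurable[G (l + 1)] (X l))
    (hX01 : ∀ l ω, X l ω ∈ unitInterval) {θ : ℝ} (hθ : 0 ≤ θ) (k : ℕ) :
    ∫ ω, {ω | ∀ l < k, μ[X l | G l] ω ≤ θ}.indicator (fun ω => ∏ l ∈ range k, X l ω) ω ∂μ
      ≤ θ ^ k := by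
  set S : ℕ → Set Ω := fun k => {ω | ∀ l < k, μ[X l | G l] ω ≤ θ}
  set P : ℕ → Ω → ℝ := fun k ω => ∏ l ∈ range k, X l ω
  have hP : ∀ k, StronglyMeasurable[G k] (P k) := stronglyMeasurable_prod_range G hX
  have hP01 : ∀ k ω, P k ω ∈ unitInterval := fun k ω =>
    unitInterval.prod_mem fun l _ => hX01 l ω
  have h_int : ∀ {f : Ω → ℝ} (j : ℕ), StronglyMeasurable[G j] f → (∀ ω, f ω ∈ unitInterval) →
      Integrable f μ := fun j hf =>
    integrable_of_mem_unitInterval (hf.mono (G.le j)).aestronglyMeasurable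
  induction k with
  | zero => simp
  | succ k ih =>
    set g := (S (k + 1)).indicator (P k)
    have hg : StronglyMeasurable[G k] g :=
      (hP k).indicator (measurableSet_setOf_forall_condExp_le G X θ le_rfl)
    have hg01 : ∀ ω, g ω ∈ unitInterval := indicator_mem_unitInterval (hP01 k)
    have hsplit : (S (k + 1)).indicator (P (k + 1)) = g * X k := funext fun ω => by
      simp only [P, prod_range_succ]; exact Set.indicator_mul_left _ _ _
    have hg_le : g ≤ (S k).indicator (P k) :=
      Set.indicator_le_indicator_of_subset (fun ω hω l hl => hω l (hl.trans k.lt_succ_self))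
        fun ω => (hP01 k ω).1
    calc ∫ ω, (S (k + 1)).indicator (P (k + 1)) ω ∂μ = ∫ ω, (g * X k) ω ∂μ := by rw [hsplit]
      _ ≤ θ * ∫ ω, g ω ∂μ :=
        integral_mul_le_of_condExp_le (G.le k) hg (fun ω => (hg01 ω).1) (h_int k hg hg01)
          (h_int (k + 1) ((hg.mono (G.mono k.le_succ)).mul (hX k))
            fun ω => unitInterval.mul_mem (hg01 ω) (hX01 k ω))
          (h_int (k + 1) (hX k) (hX01 k))
          fun ω hω => Set.mem_of_indicator_ne_zero hω k k.lt_succ_self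
      _ ≤ θ * ∫ ω, (S k).indicator (P k) ω ∂μ := by
        refine mul_le_mul_of_nonneg_left (integral_mono (h_int k hg hg01) ?_ hg_le) hθ
        exact h_int k ((hP k).indicator (measurableSet_setOf_forall_condExp_le G X θ k.le_succ))
          (indicator_mem_unitInterval (hP01 k))
      _ ≤ θ * θ ^ k := by gcongr
      _ = θ ^ (k + 1) := (pow_succ' θ k).symm

theorem measure_setOf_condExp_le_le [IsProbabilityMeasure μ] (G : Filtration ℕ m0)
    {X : ℕ → Ω → ℝ} (hX : ∀ l, StronglyMeasurable[G (l + 1)] (X l))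
    (hX01 : ∀ l ω, X l ω ∈ unitInterval) {θ : ℝ} (hθ : 0 ≤ θ) {c : ℝ} (hc : 0 < c) {k : ℕ}
    {E : Set Ω} (hE : ∀ ω ∈ E, c ≤ ∏ l ∈ range k, X l ω) :
    μ {ω | ω ∈ E ∧ ∀ l < k, μ[X l | G l] ω ≤ θ} ≤ ENNReal.ofReal (c⁻¹ * θ ^ k) := by
  set Z := {ω | ∀ l < k, μ[X l | G l] ω ≤ θ}.indicator fun ω => ∏ l ∈ range k, X l ω
  have hZ01 : ∀ ω, Z ω ∈ unitInterval :=
    indicator_mem_unitInterval fun ω => unitInterval.prod_mem fun l _ => hX01 l ω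
  have hZ_int : Integrable Z μ := integrable_of_mem_unitInterval
    (((stronglyMeasurable_prod_range G hX k).indicator
      (measurableSet_setOf_forall_condExp_le G X θ k.le_succ)).mono (G.le k)).aestronglyMeasurable
    hZ01
  have hsub : {ω | ω ∈ E ∧ ∀ l < k, μ[X l | G l] ω ≤ θ} ⊆ {ω | c ≤ Z ω} :=
    fun ω ⟨hωE, hωS⟩ => (hE ω hωE).trans_eq (Set.indicator_of_mem (s := {ω | _}) hωS _).symm
  have hmarkov : c * μ.real {ω | c ≤ Z ω} ≤ θ ^ k :=
    (mul_meas_ge_le_integral_of_nonneg (ae_of_all _ fun ω => (hZ01 ω).1) hZ_int c).trans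
      (integral_indicator_prod_le_pow G hX hX01 hθ k)
  rw [ENNReal.le_ofReal_iff_toReal_le (measure_ne_top _ _) (by positivity)]
  calc μ.real _ ≤ μ.real {ω | c ≤ Z ω} := measureReal_mono hsub
    _ ≤ c⁻¹ * θ ^ k := (le_inv_mul_iff₀ hc).mpr hmarkov

end MeasureTheory

theorem stopping_time_geometric_bound_general {Ω : Type*} {m0 : MeasurableSpace Ω}
    (μ : Measure Ω) [IsProbabilityMeasure μ]
    (n : ℕ)
    (𝓕 : Filtration ℕ∞ m0)
    (τ : ℕ → Ω → ℕ∞) (hτ : ∀ m, IsStoppingTime 𝓕 (fun ω => (τ m ω : WithTop ℕ∞)))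
    (hmono : ∀ m ω, τ m ω ≤ τ (m + 1) ω)
    (θ : ℝ) (hθ0 : 0 < θ) (m : ℕ) :
    μ {ω | τ m ω ≤ (n : ℕ∞) ∧ ∀ l < m,
        (μ[fun ω' => expNegDiv n (τ (l + 1) ω' - τ l ω') | (hτ l).measurableSpace]) ω ≤ θ}
      ≤ ENNReal.ofReal (Real.exp 1 * θ ^ m) := by
  set G := Filtration.ofStoppingTimes hτ fun l ω => WithTop.coe_le_coe.mpr (hmono l ω)
  have hτ_meas : ∀ l, Measurable[G l] (τ l) := fun l => (hτ l).measurable_of_countable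
  have hX : ∀ l, StronglyMeasurable[G (l + 1)] fun ω => expNegDiv n (τ (l + 1) ω - τ l ω) :=
    fun l => ((measurable_of_countable fun p : ℕ∞ × ℕ∞ => expNegDiv n (p.1 - p.2)).comp
      ((hτ_meas (l + 1)).prodMk ((hτ_meas l).mono (G.mono l.le_succ) le_rfl))).stronglyMeasurable
  have hE : ∀ ω ∈ {ω | τ m ω ≤ n},
      Real.exp (-1) ≤ ∏ l ∈ range m, expNegDiv n (τ (l + 1) ω - τ l ω) := fun ω hω =>
    calc Real.exp (-1) ≤ expNegDiv n (τ m ω) := exp_neg_one_le_expNegDiv hω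
      _ ≤ ∏ l ∈ range m, expNegDiv n (τ (l + 1) ω - τ l ω) := by
        rw [expNegDiv_eq_mul_prod_of_monotone n (monotone_nat_of_le_succ (hmono · ω))]
        exact mul_le_of_le_one_left
          (prod_nonneg fun l _ => (expNegDiv_mem_unitInterval _ _).1)
          (expNegDiv_mem_unitInterval _ _).2
  have h := measure_setOf_condExp_le_le (μ := μ) G hX
    (fun _ _ => expNegDiv_mem_unitInterval _ _) hθ0.le (Real.exp_pos (-1)) hE
  rwa [Real.exp_neg, inv_inv] at h

/-- Let `(τ_m)` (`τ₀ = 0`) be an increasing sequence of stopping times with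
values in `{1,…,n} ∪ {∞}`.  For `θ ∈ (0,1)` and `m ≥ 1`, the probability of
the event `{τ_m ≤ n` and `E[exp(-(τ_{l+1}-τ_l)/n) | 𝓕_{τ_l}] ≤ θ` for all
`l < m}` is at most `e·θ^m`. -/
theorem stopping_time_geometric_bound {Ω : Type*} {m0 : MeasurableSpace Ω}
    (μ : Measure Ω) [IsProbabilityMeasure μ]
    (n : ℕ) (hn : 1 ≤ n)
    (𝓕 : Filtration ℕ∞ m0)
    (τ : ℕ → Ω → ℕ∞) (hτ : ∀ m, IsStoppingTime 𝓕 (fun ω => (τ m ω : WithTop ℕ∞)))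
    (hτ0 : ∀ ω, τ 0 ω = 0)
    (hmono : ∀ m ω, τ m ω ≤ τ (m + 1) ω)
    (hval : ∀ m, 1 ≤ m → ∀ ω, τ m ω = ⊤ ∨ (1 ≤ τ m ω ∧ τ m ω ≤ (n : ℕ∞)))
    (θ : ℝ) (hθ0 : 0 < θ) (hθ1 : θ < 1) (m : ℕ) (hm : 1 ≤ m) :
    μ {ω | τ m ω ≤ (n : ℕ∞) ∧ ∀ l < m,
        (μ[fun ω' => expNegDiv n (τ (l + 1) ω' - τ l ω') | (hτ l).measurableSpace]) ω ≤ θ}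
      ≤ ENNReal.ofReal (Real.exp 1 * θ ^ m) :=
  stopping_time_geometric_bound_general μ n 𝓕 τ hτ hmono θ hθ0 m
end

section
/- Let $H$ be a Hilbert space and $u, f \in H$ with $\|u\| = \|f\| = 1$. For $\rho \in [\frac{1}{2}, 1]$ define operators $U\psi = \rho\psi + (1-\rho)\langle \psi, u\rangle u$ and $V\psi = (2\rho - 1)\psi + 2(1-\rho)\langle\psi, v\rangle v$ where $\|v\| = 1$. Then $U$ and $V$ are self-adjoint positive contractions, and if $(2|\langle u, v\rangle|^2 - 1)(2|\langle f, v\rangle|^2 - 1) \le |\langle f, u\rangle|^2$ holds for all unit $f$ (which it does when $2|\langle u,v\rangle|^2 \ge 1$), then $(2\rho - 1 + 2(1-\rho)|\langle u,v\rangle|^2) V \le U$ as quadratic forms. -/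
/-!
Both quadratic forms are explicit: `re ⟪Uψ, ψ⟫ = ρ‖ψ‖² + (1-ρ)|⟪u, ψ⟫|²` and similarly for `V`,
so the comparison reduces to `2|⟪u, v⟫|²|⟪v, ψ⟫|² ≤ |⟪u, ψ⟫|² + ‖ψ‖²`. For this, split
`ψ = ⟪v, ψ⟫v + w` with `w ⟂ v`; then `⟪u, ψ⟫ = ⟪u, v⟫⟪v, ψ⟫ + ⟪u', w⟫` where `u' = u - ⟪v, u⟫v`
has `‖u'‖² = 1 - |⟪u, v⟫|²`, and the reverse triangle inequality, Cauchy–Schwarz for `⟪u', w⟫`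
and AM–GM finish. Self-adjointness and positivity come from writing `U = ρ + (1-ρ)|u⟩⟨u|`.
-/

open InnerProductSpace RCLike

section

variable {𝕜 E : Type*} [RCLike 𝕜] [NormedAddCommGroup E] [InnerProductSpace 𝕜 E]

local notation "⟪" x ", " y "⟫" => inner 𝕜 x y

theorem inner_sub_inner_smul_self_eq_zero {v : E} (hv : ‖v‖ = 1) (x : E) :
    ⟪v, x - ⟪v, x⟫ • v⟫ = 0 := by
  simp [inner_sub_right, inner_smul_right, inner_self_eq_norm_sq_to_K, hv]

theorem sq_norm_eq_sq_norm_inner_add_sq_norm_sub {v : E} (hv : ‖v‖ = 1) (x : E) :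
    ‖x‖ ^ 2 = ‖⟪v, x⟫‖ ^ 2 + ‖x - ⟪v, x⟫ • v‖ ^ 2 := by
  have h := norm_add_sq_eq_norm_sq_add_norm_sq_of_inner_eq_zero (𝕜 := 𝕜) (⟪v, x⟫ • v)
    (x - ⟪v, x⟫ • v) (by rw [inner_smul_left, inner_sub_inner_smul_self_eq_zero hv, mul_zero])
  rw [add_sub_cancel, norm_smul, hv, mul_one] at h
  rw [sq, h, sq, sq]

theorem two_mul_sq_norm_inner_mul_sq_norm_inner_le {u v : E} (hu : ‖u‖ = 1) (hv : ‖v‖ = 1)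
    (ψ : E) :
    2 * ‖⟪u, v⟫‖ ^ 2 * ‖⟪v, ψ⟫‖ ^ 2 ≤ ‖⟪u, ψ⟫‖ ^ 2 + ‖ψ‖ ^ 2 := by
  set w := ψ - ⟪v, ψ⟫ • v
  set u' := u - ⟪v, u⟫ • v
  have hψ : ‖ψ‖ ^ 2 = ‖⟪v, ψ⟫‖ ^ 2 + ‖w‖ ^ 2 := sq_norm_eq_sq_norm_inner_add_sq_norm_sub hv ψ
  have hu' : 1 = ‖⟪u, v⟫‖ ^ 2 + ‖u'‖ ^ 2 := by
    rw [← one_pow 2, ← hu, norm_inner_symm]; exact sq_norm_eq_sq_norm_inner_add_sq_norm_sub hv u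
  have hsplit : ⟪u, ψ⟫ = ⟪u, v⟫ * ⟪v, ψ⟫ + ⟪u', w⟫ := by
    have hw : ⟪⟪v, u⟫ • v, w⟫ = 0 := by
      rw [inner_smul_left, inner_sub_inner_smul_self_eq_zero hv, mul_zero]
    rw [inner_sub_left, hw, sub_zero, inner_sub_right, inner_smul_right]
    ring
  have hrev : (‖⟪u, v⟫‖ * ‖⟪v, ψ⟫‖ - ‖⟪u', w⟫‖) ^ 2 ≤ ‖⟪u, ψ⟫‖ ^ 2 := by
    rw [hsplit, ← norm_mul, ← norm_neg ⟪u', w⟫]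
    have h := abs_norm_sub_norm_le (⟪u, v⟫ * ⟪v, ψ⟫) (-⟪u', w⟫)
    rw [sub_neg_eq_add] at h
    exact sq_le_sq.2 (h.trans (le_abs_self _))
  have hcs : ‖⟪u', w⟫‖ ≤ ‖u'‖ * ‖w‖ := norm_inner_le_norm u' w
  have hCB : 0 ≤ ‖⟪u, v⟫‖ * ‖⟪v, ψ⟫‖ := by positivity
  -- `2CB·Y ≤ 2CB·SW ≤ S²B² + C²W²` with `C = ‖⟪u, v⟫‖`, `B = ‖⟪v, ψ⟫‖`, `S = ‖u'‖`, `W = ‖w‖`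
  nlinarith [mul_le_mul_of_nonneg_left hcs hCB, sq_nonneg (‖u'‖ * ‖⟪v, ψ⟫‖ - ‖⟪u, v⟫‖ * ‖w‖),
    congrArg (· * ‖⟪v, ψ⟫‖ ^ 2) hu', congrArg (· * ‖w‖ ^ 2) hu', sq_nonneg ‖⟪u', w⟫‖,
    mul_nonneg (sq_nonneg ‖u'‖) (sq_nonneg ‖w‖)]

variable (𝕜) in
noncomputable def scalarAddRankOne (r s : ℝ) (x : E) : E →L[𝕜] E :=
  (r : 𝕜) • 1 + (s : 𝕜) • rankOne 𝕜 x x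

theorem scalarAddRankOne_apply (r s : ℝ) (x ψ : E) :
    scalarAddRankOne 𝕜 r s x ψ = (r : 𝕜) • ψ + ((s : 𝕜) * ⟪x, ψ⟫) • x := by
  simp [scalarAddRankOne, mul_smul]

theorem isPositive_scalarAddRankOne {r s : ℝ} (hr : 0 ≤ r) (hs : 0 ≤ s) (x : E) :
    (scalarAddRankOne 𝕜 r s x).IsPositive :=
  (ContinuousLinearMap.isPositive_one.smul_of_nonneg (ofReal_nonneg.2 hr)).add
    ((isPositive_rankOne_self x).smul_of_nonneg (ofReal_nonneg.2 hs))

theorem norm_scalarAddRankOne_le {r s : ℝ} (hr : 0 ≤ r) (hs : 0 ≤ s) (x : E) :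
    ‖scalarAddRankOne 𝕜 r s x‖ ≤ r + s * ‖x‖ ^ 2 := by
  refine (norm_add_le _ _).trans (add_le_add ?_ ?_)
  · rw [norm_smul, norm_ofReal, abs_of_nonneg hr]
    exact mul_le_of_le_one_right hr ContinuousLinearMap.norm_id_le
  · rw [norm_smul, norm_ofReal, abs_of_nonneg hs, norm_rankOne, sq]

theorem norm_scalarAddRankOne_apply_le {r s : ℝ} (hr : 0 ≤ r) (hs : 0 ≤ s) {x : E}
    (hrs : r + s * ‖x‖ ^ 2 ≤ 1) (ψ : E) : ‖scalarAddRankOne 𝕜 r s x ψ‖ ≤ ‖ψ‖ :=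
  ((scalarAddRankOne 𝕜 r s x).le_of_opNorm_le ((norm_scalarAddRankOne_le hr hs x).trans hrs)
    ψ).trans_eq (one_mul _)

theorem re_inner_scalarAddRankOne_apply_self (r s : ℝ) (x ψ : E) :
    re ⟪scalarAddRankOne 𝕜 r s x ψ, ψ⟫ = r * ‖ψ‖ ^ 2 + s * ‖⟪x, ψ⟫‖ ^ 2 := by
  rw [scalarAddRankOne_apply, inner_add_left, inner_smul_left, inner_smul_left, map_mul,
    conj_ofReal, conj_ofReal, inner_self_eq_norm_sq_to_K, mul_assoc, RCLike.conj_mul]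
  norm_cast

theorem mul_re_inner_scalarAddRankOne_le {u v : E} (hu : ‖u‖ = 1) (hv : ‖v‖ = 1) {ρ : ℝ}
    (hρ : ρ ∈ Set.Icc (1 / 2 : ℝ) 1) (ψ : E) :
    (2 * ρ - 1 + 2 * (1 - ρ) * ‖⟪u, v⟫‖ ^ 2)
        * re ⟪scalarAddRankOne 𝕜 (2 * ρ - 1) (2 * (1 - ρ)) v ψ, ψ⟫
      ≤ re ⟪scalarAddRankOne 𝕜 ρ (1 - ρ) u ψ, ψ⟫ := by
  obtain ⟨hρ₁, hρ₂⟩ := hρ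
  rw [re_inner_scalarAddRankOne_apply_self, re_inner_scalarAddRankOne_apply_self]
  have hkey := two_mul_sq_norm_inner_mul_sq_norm_inner_le (𝕜 := 𝕜) hu hv ψ
  have hvψ : ‖⟪v, ψ⟫‖ ^ 2 ≤ ‖ψ‖ ^ 2 := by
    have := norm_inner_le_norm (𝕜 := 𝕜) v ψ
    rw [hv, one_mul] at this
    gcongr
  have huv : ‖⟪u, v⟫‖ ^ 2 ≤ 1 := by
    have := norm_inner_le_norm (𝕜 := 𝕜) u v
    rw [hu, hv, one_mul] at this
    exact pow_le_one₀ (norm_nonneg _) this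
  -- with `t = ‖⟪u, v⟫‖²`, `a = ‖⟪u, ψ⟫‖²`, `b = ‖⟪v, ψ⟫‖²`, `n = ‖ψ‖²`, the right side minus the
  -- left side is `(1 - ρ) * ((a + n - 2tb) + 2(2ρ - 1)(1 - t)(n - b))`
  nlinarith [mul_nonneg (sub_nonneg.2 hρ₂) (sub_nonneg.2 hkey),
    mul_nonneg (mul_nonneg (mul_nonneg (sub_nonneg.2 hρ₂) (sub_nonneg.2 huv))
      (by linarith : (0 : ℝ) ≤ 2 * ρ - 1)) (sub_nonneg.2 hvψ)]

end

theorem projection_operators_ineq_general {E : Type*} [NormedAddCommGroup E]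
    [InnerProductSpace ℂ E]
    (u v : E) (hu : ‖u‖ = 1) (hv : ‖v‖ = 1)
    (ρ : ℝ) (hρ : ρ ∈ Set.Icc (1 / 2 : ℝ) 1)
    (U V : E → E)
    (hU : ∀ ψ, U ψ = ((ρ : ℂ) • ψ) + ((((1 - ρ : ℝ) : ℂ) * (inner ℂ u ψ : ℂ)) • u))
    (hV : ∀ ψ, V ψ = (((2 * ρ - 1 : ℝ) : ℂ) • ψ)
      + ((((2 * (1 - ρ) : ℝ) : ℂ) * (inner ℂ v ψ : ℂ)) • v)) :
    (∀ ψ φ : E, (inner ℂ (U ψ) φ : ℂ) = inner ℂ ψ (U φ))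
    ∧ (∀ ψ : E, 0 ≤ (inner ℂ (U ψ) ψ : ℂ).re)
    ∧ (∀ ψ : E, ‖U ψ‖ ≤ ‖ψ‖)
    ∧ (∀ ψ φ : E, (inner ℂ (V ψ) φ : ℂ) = inner ℂ ψ (V φ))
    ∧ (∀ ψ : E, 0 ≤ (inner ℂ (V ψ) ψ : ℂ).re)
    ∧ (∀ ψ : E, ‖V ψ‖ ≤ ‖ψ‖)
    ∧ (∀ ψ : E, (2 * ρ - 1 + 2 * (1 - ρ) * ‖(inner ℂ u v : ℂ)‖ ^ 2)
        * (inner ℂ (V ψ) ψ : ℂ).re ≤ (inner ℂ (U ψ) ψ : ℂ).re) := by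
  obtain rfl : U = scalarAddRankOne ℂ ρ (1 - ρ) u := funext fun ψ => by
    rw [hU, scalarAddRankOne_apply]; rfl
  obtain rfl : V = scalarAddRankOne ℂ (2 * ρ - 1) (2 * (1 - ρ)) v := funext fun ψ => by
    rw [hV, scalarAddRankOne_apply]; rfl
  have hρ₀ : 0 ≤ ρ := by linarith [hρ.1]
  have hρ' : 0 ≤ 1 - ρ := by linarith [hρ.2]
  have h2ρ : 0 ≤ 2 * ρ - 1 := by linarith [hρ.1]
  have h2ρ' : 0 ≤ 2 * (1 - ρ) := by linarith [hρ.2]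
  have hUpos := isPositive_scalarAddRankOne (𝕜 := ℂ) hρ₀ hρ' u
  have hVpos := isPositive_scalarAddRankOne (𝕜 := ℂ) h2ρ h2ρ' v
  exact ⟨hUpos.inner_left_eq_inner_right, hUpos.re_inner_nonneg_left,
    norm_scalarAddRankOne_apply_le hρ₀ hρ' (by rw [hu]; linarith), hVpos.inner_left_eq_inner_right,
    hVpos.re_inner_nonneg_left, norm_scalarAddRankOne_apply_le h2ρ h2ρ' (by rw [hv]; linarith),
    mul_re_inner_scalarAddRankOne_le hu hv hρ⟩

/-- For unit vectors `u, v` with `2|⟨u,v⟩|² ≥ 1` and `ρ ∈ [1/2, 1]`, the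
operators `Uψ = ρψ + (1-ρ)⟨u,ψ⟩u` and `Vψ = (2ρ-1)ψ + 2(1-ρ)⟨v,ψ⟩v` are
self-adjoint positive contractions and satisfy
`(2ρ - 1 + 2(1-ρ)|⟨u,v⟩|²) V ≤ U` as quadratic forms. -/
theorem projection_operators_ineq {E : Type*} [NormedAddCommGroup E]
    [InnerProductSpace ℂ E]
    (u v : E) (hu : ‖u‖ = 1) (hv : ‖v‖ = 1)
    (huv : 1 ≤ 2 * ‖(inner ℂ u v : ℂ)‖ ^ 2)
    (ρ : ℝ) (hρ : ρ ∈ Set.Icc (1 / 2 : ℝ) 1)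
    (U V : E → E)
    (hU : ∀ ψ, U ψ = ((ρ : ℂ) • ψ) + ((((1 - ρ : ℝ) : ℂ) * (inner ℂ u ψ : ℂ)) • u))
    (hV : ∀ ψ, V ψ = (((2 * ρ - 1 : ℝ) : ℂ) • ψ)
      + ((((2 * (1 - ρ) : ℝ) : ℂ) * (inner ℂ v ψ : ℂ)) • v)) :
    (∀ ψ φ : E, (inner ℂ (U ψ) φ : ℂ) = inner ℂ ψ (U φ))
    ∧ (∀ ψ : E, 0 ≤ (inner ℂ (U ψ) ψ : ℂ).re)
    ∧ (∀ ψ : E, ‖U ψ‖ ≤ ‖ψ‖)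
    ∧ (∀ ψ φ : E, (inner ℂ (V ψ) φ : ℂ) = inner ℂ ψ (V φ))
    ∧ (∀ ψ : E, 0 ≤ (inner ℂ (V ψ) ψ : ℂ).re)
    ∧ (∀ ψ : E, ‖V ψ‖ ≤ ‖ψ‖)
    ∧ (∀ ψ : E, (2 * ρ - 1 + 2 * (1 - ρ) * ‖(inner ℂ u v : ℂ)‖ ^ 2)
        * (inner ℂ (V ψ) ψ : ℂ).re ≤ (inner ℂ (U ψ) ψ : ℂ).re) :=
  projection_operators_ineq_general u v hu hv ρ hρ U V hU hV
end

section
/- Let $\mu, \mu_1, \mu_2, \dots$ be probability measures on $[0,1] \times [0,1]$ whose projections to both coordinates equal Lebesgue measure. Then the following are equivalent: (a) $\int f\, d\mu_n \to \int f\, d\mu$ for all continuous $f : [0,1]^2 \to \mathbb{R}$; (b) $\mu_n(A \times B) \to \mu(A \times B)$ for all Lebesgue-measurable sets $A, B \subset [0,1]$; (c) $\int f(x)g(y)\, \mu_n(dx\,dy) \to \int f(x)g(y)\, \mu(dx\,dy)$ for all $f, g \in L^2[0,1]$. -/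
/-!
For a measure `ν` on `[0,1]²` with Lebesgue marginals, Hölder's inequality and the marginal
condition give `|∫ f(x) g(y) dν| ≤ ‖f‖₂ ‖g‖₂`. Hence the functionals `f ↦ ∫ f(x) g(y) dμₙ` are
uniformly Lipschitz on `L²`, so convergence on the dense set of bounded continuous functions, which
(a) provides, extends to all of `L²`: this is (a) ⇒ (c). Indicators of sets lie in `L²`, which gives
(c) ⇒ (b). Finally, a continuous function on the square is uniformly close to a step function on a
fine grid of rectangles, whose integrals converge by (b): this is (b) ⇒ (a).
-/

open MeasureTheory Filter Topology Set
open scoped ENNReal BoundedContinuousFunction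

section Pushforward

variable {Ω α β : Type*} [MeasurableSpace Ω] [MeasurableSpace α] {ν : Measure Ω} {X : Ω → α}

theorem abs_integral_mul_le_eLpNorm_mul_eLpNorm {u v : Ω → ℝ} (hu : MemLp u 2 ν)
    (hv : MemLp v 2 ν) :
    |∫ ω, u ω * v ω ∂ν| ≤ (eLpNorm u 2 ν).toReal * (eLpNorm v 2 ν).toReal := by
  have holder : eLpNorm (u * v) 1 ν ≤ eLpNorm u 2 ν * eLpNorm v 2 ν :=
    (eLpNorm_smul_le_mul_eLpNorm (p := 2) (q := 2) (r := 1) hv.1 hu.1 :)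
  calc |∫ ω, u ω * v ω ∂ν| ≤ ∫ ω, ‖(u * v) ω‖ ∂ν := norm_integral_le_integral_norm (u * v)
    _ = (eLpNorm (u * v) 1 ν).toReal := by
      rw [integral_norm_eq_lintegral_enorm (hu.1.mul hv.1), eLpNorm_one_eq_lintegral_enorm]
    _ ≤ (eLpNorm u 2 ν * eLpNorm v 2 ν).toReal :=
      ENNReal.toReal_mono (ENNReal.mul_ne_top hu.eLpNorm_ne_top hv.eLpNorm_ne_top) holder
    _ = _ := ENNReal.toReal_mul

theorem integral_comp_mul_congr {μX : Measure α} (hX : AEMeasurable X ν) (hνX : ν.map X = μX)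
    {f f' : α → ℝ} (h : f =ᵐ[μX] f') (v : Ω → ℝ) :
    ∫ ω, f (X ω) * v ω ∂ν = ∫ ω, f' (X ω) * v ω ∂ν := by
  subst hνX
  exact integral_congr_ae <| (ae_eq_comp hX h).mono fun ω hω => congrArg (· * v ω) hω

variable [MeasurableSpace β] {Y : Ω → β}

theorem abs_integral_comp_mul_comp_le (hX : AEMeasurable X ν) (hY : AEMeasurable Y ν)
    {f : α → ℝ} {g : β → ℝ} (hf : MemLp f 2 (ν.map X)) (hg : MemLp g 2 (ν.map Y)) :
    |∫ ω, f (X ω) * g (Y ω) ∂ν| ≤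
      (eLpNorm f 2 (ν.map X)).toReal * (eLpNorm g 2 (ν.map Y)).toReal := by
  rw [eLpNorm_map_measure hf.1 hX, eLpNorm_map_measure hg.1 hY]
  exact abs_integral_mul_le_eLpNorm_mul_eLpNorm (hf.comp_of_map hX) (hg.comp_of_map hY)

theorem lipschitzWith_integral_comp_mul_comp {μX : Measure α} {μY : Measure β}
    (hX : AEMeasurable X ν) (hY : AEMeasurable Y ν) (hνX : ν.map X = μX) (hνY : ν.map Y = μY)
    {g : β → ℝ} (hg : MemLp g 2 μY) :
    LipschitzWith (eLpNorm g 2 μY).toNNReal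
      (fun u : Lp ℝ 2 μX => ∫ ω, u (X ω) * g (Y ω) ∂ν) := by
  subst hνX hνY
  refine LipschitzWith.of_dist_le_mul fun u u' => ?_
  have hint : ∀ w : Lp ℝ 2 (ν.map X), Integrable (fun ω => w (X ω) * g (Y ω)) ν := fun w =>
    ((Lp.memLp w).comp_of_map hX).integrable_mul (hg.comp_of_map hY)
  rw [Real.dist_eq, ← integral_sub (hint u) (hint u'), Lp.dist_def, mul_comm]
  simp only [← sub_mul]
  exact abs_integral_comp_mul_comp_le hX hY ((Lp.memLp u).sub (Lp.memLp u')) hg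

theorem tendsto_integral_comp_mul_comp_of_boundedContinuous [TopologicalSpace α] [BorelSpace α]
    [NormalSpace α] {ι : Type*} {l : Filter ι} {νs : ι → Measure Ω} {μX : Measure α}
    {μY : Measure β} [IsFiniteMeasure μX] [μX.WeaklyRegular] (hX : Measurable X)
    (hY : Measurable Y) (hνsX : ∀ i, (νs i).map X = μX) (hνsY : ∀ i, (νs i).map Y = μY)
    (hνX : ν.map X = μX) (hνY : ν.map Y = μY) {g : β → ℝ} (hg : MemLp g 2 μY)
    (h : ∀ f : α →ᵇ ℝ, Tendsto (fun i => ∫ ω, f (X ω) * g (Y ω) ∂νs i) l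
      (𝓝 (∫ ω, f (X ω) * g (Y ω) ∂ν)))
    {f : α → ℝ} (hf : MemLp f 2 μX) :
    Tendsto (fun i => ∫ ω, f (X ω) * g (Y ω) ∂νs i) l (𝓝 (∫ ω, f (X ω) * g (Y ω) ∂ν)) := by
  set S := {u : Lp ℝ 2 μX | Tendsto (fun i => ∫ ω, u (X ω) * g (Y ω) ∂νs i) l
      (𝓝 (∫ ω, u (X ω) * g (Y ω) ∂ν))} with hS
  have hclosed : IsClosed S :=
    (LipschitzWith.uniformEquicontinuous _ _ fun i =>
      lipschitzWith_integral_comp_mul_comp hX.aemeasurable hY.aemeasurable (hνsX i) (hνsY i)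
        hg).equicontinuous.isClosed_setOfPred_tendsto
      (lipschitzWith_integral_comp_mul_comp hX.aemeasurable hY.aemeasurable hνX hνY hg).continuous
  have hbc : range (BoundedContinuousFunction.toLp (E := ℝ) 2 μX ℝ) ⊆ S := by
    rintro _ ⟨f', rfl⟩
    have hf' := BoundedContinuousFunction.coeFn_toLp 2 μX ℝ f'
    simpa only [hS, mem_ofPred_eq, integral_comp_mul_congr hX.aemeasurable (hνsX _) hf',
      integral_comp_mul_congr hX.aemeasurable hνX hf'] using h f'
  have hdense := BoundedContinuousFunction.toLp_denseRange (p := 2) ℝ μX ℝ ENNReal.ofNat_ne_top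
  have hf_mem := hclosed.closure_subset_iff.2 hbc (hdense.closure_range ▸ mem_univ (hf.toLp f))
  simpa only [hS, mem_ofPred_eq, integral_comp_mul_congr hX.aemeasurable (hνsX _) hf.coeFn_toLp,
    integral_comp_mul_congr hX.aemeasurable hνX hf.coeFn_toLp] using hf_mem

end Pushforward

section Marginals

variable {α β : Type*} [MeasurableSpace α] [MeasurableSpace β] {ι : Type*} {l : Filter ι}
  {νs : ι → Measure (α × β)} {ν : Measure (α × β)} {μX : Measure α} {μY : Measure β}

theorem tendsto_integral_mul_of_boundedContinuous [TopologicalSpace α] [BorelSpace α]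
    [NormalSpace α] [TopologicalSpace β] [BorelSpace β] [NormalSpace β] [IsFiniteMeasure μX]
    [μX.WeaklyRegular] [IsFiniteMeasure μY] [μY.WeaklyRegular]
    (hνs1 : ∀ i, (νs i).map Prod.fst = μX) (hνs2 : ∀ i, (νs i).map Prod.snd = μY)
    (hν1 : ν.map Prod.fst = μX) (hν2 : ν.map Prod.snd = μY)
    (h : ∀ (f : α →ᵇ ℝ) (g : β →ᵇ ℝ),
      Tendsto (fun i => ∫ p, f p.1 * g p.2 ∂νs i) l (𝓝 (∫ p, f p.1 * g p.2 ∂ν)))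
    {f : α → ℝ} {g : β → ℝ} (hf : MemLp f 2 μX) (hg : MemLp g 2 μY) :
    Tendsto (fun i => ∫ p, f p.1 * g p.2 ∂νs i) l (𝓝 (∫ p, f p.1 * g p.2 ∂ν)) := by
  have hf_bc : ∀ g' : β →ᵇ ℝ,
      Tendsto (fun i => ∫ p, g' p.2 * f p.1 ∂νs i) l (𝓝 (∫ p, g' p.2 * f p.1 ∂ν)) := fun g' => by
    simpa only [mul_comm (f _)] using tendsto_integral_comp_mul_comp_of_boundedContinuous
      measurable_fst measurable_snd hνs1 hνs2 hν1 hν2 (g'.memLp_top.mono_exponent le_top)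
      (h · g') hf
  simpa only [mul_comm (g _)] using tendsto_integral_comp_mul_comp_of_boundedContinuous
    measurable_snd measurable_fst hνs2 hνs1 hν2 hν1 hf hf_bc hg

theorem memLp_indicator_one₀ {μ : Measure α} [IsFiniteMeasure μ] {A : Set α}
    (hA : NullMeasurableSet A μ) (p : ℝ≥0∞) : MemLp (A.indicator (1 : α → ℝ)) p μ :=
  .of_bound (aestronglyMeasurable_const.indicator₀ hA) 1 <| .of_forall fun _ =>
    (norm_indicator_le_norm_self _ _).trans norm_one.le

theorem integral_indicator_one_mul_indicator_one (hν1 : ν.map Prod.fst = μX)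
    (hν2 : ν.map Prod.snd = μY) {A : Set α} {B : Set β} (hA : NullMeasurableSet A μX)
    (hB : NullMeasurableSet B μY) :
    ∫ p, A.indicator 1 p.1 * B.indicator 1 p.2 ∂ν = ν.real (A ×ˢ B) := by
  subst hν1 hν2
  have hAB : NullMeasurableSet (A ×ˢ B) ν := by
    rw [Set.prod_eq]
    exact (hA.preimage (MeasurePreserving.mk measurable_fst rfl).quasiMeasurePreserving).inter
      (hB.preimage (MeasurePreserving.mk measurable_snd rfl).quasiMeasurePreserving)
  have hprod : (fun p : α × β => A.indicator (1 : α → ℝ) p.1 * B.indicator 1 p.2) =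
      (A ×ˢ B).indicator 1 := funext fun _ => indicator_prod_one.symm
  rw [hprod, integral_indicator₀ hAB]
  simp

theorem tendsto_measureReal_prod_of_tendsto_integral_mul [IsFiniteMeasure μX] [IsFiniteMeasure μY]
    (hνs1 : ∀ i, (νs i).map Prod.fst = μX) (hνs2 : ∀ i, (νs i).map Prod.snd = μY)
    (hν1 : ν.map Prod.fst = μX) (hν2 : ν.map Prod.snd = μY)
    (h : ∀ (f : α → ℝ) (g : β → ℝ), MemLp f 2 μX → MemLp g 2 μY →
      Tendsto (fun i => ∫ p, f p.1 * g p.2 ∂νs i) l (𝓝 (∫ p, f p.1 * g p.2 ∂ν)))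
    {A : Set α} {B : Set β} (hA : NullMeasurableSet A μX) (hB : NullMeasurableSet B μY) :
    Tendsto (fun i => (νs i).real (A ×ˢ B)) l (𝓝 (ν.real (A ×ˢ B))) := by
  simpa only [integral_indicator_one_mul_indicator_one (hνs1 _) (hνs2 _) hA hB,
    integral_indicator_one_mul_indicator_one hν1 hν2 hA hB] using
    h _ _ (memLp_indicator_one₀ hA 2) (memLp_indicator_one₀ hB 2)

theorem ae_mem_prod_of_map_eq_restrict {μ : Measure α} {μ' : Measure β} {s : Set α}
    {t : Set β} (hs : MeasurableSet s) (ht : MeasurableSet t) (hν1 : ν.map Prod.fst = μ.restrict s)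
    (hν2 : ν.map Prod.snd = μ'.restrict t) : ∀ᵐ p ∂ν, p ∈ s ×ˢ t := by
  filter_upwards [ae_of_ae_map measurable_fst.aemeasurable (hν1 ▸ ae_restrict_mem hs),
    ae_of_ae_map measurable_snd.aemeasurable (hν2 ▸ ae_restrict_mem ht)] with p hp1 hp2
  exact ⟨hp1, hp2⟩

end Marginals

section Grid

/-- `gridIndex N x = k` means `x ∈ [k/(N+1), (k+1)/(N+1))`; on `[0,1]` the index `N + 1` occurs
only at `x = 1`, whence the ranges `Finset.range (N + 2)` below. -/
noncomputable def gridIndex (N : ℕ) (x : ℝ) : ℕ := ⌊x * (N + 1)⌋₊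

noncomputable def gridPoint (N k : ℕ) : ℝ := k / (N + 1)

def gridCell (N k : ℕ) : Set ℝ := Icc 0 1 ∩ gridIndex N ⁻¹' {k}

noncomputable def gridStep (N : ℕ) (f : ℝ × ℝ → ℝ) (p : ℝ × ℝ) : ℝ :=
  ∑ k ∈ Finset.range (N + 2) ×ˢ Finset.range (N + 2),
    (gridCell N k.1 ×ˢ gridCell N k.2).indicator (fun _ => f (gridPoint N k.1, gridPoint N k.2)) p

noncomputable def gridSum (N : ℕ) (f : ℝ × ℝ → ℝ) (ν : Measure (ℝ × ℝ)) : ℝ :=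
  ∑ k ∈ Finset.range (N + 2) ×ˢ Finset.range (N + 2),
    f (gridPoint N k.1, gridPoint N k.2) * ν.real (gridCell N k.1 ×ˢ gridCell N k.2)

variable {N : ℕ}

theorem measurableSet_gridCell (k : ℕ) : MeasurableSet (gridCell N k) :=
  measurableSet_Icc.inter <|
    (Nat.measurable_floor.comp (measurable_id.mul_const _)) (measurableSet_singleton k)

theorem gridIndex_lt {x : ℝ} (hx : x ∈ Icc 0 1) : gridIndex N x < N + 2 := by
  have : x * (N + 1) < N + 2 := by nlinarith [hx.2]
  exact (Nat.floor_lt (by nlinarith [hx.1])).2 (by exact_mod_cast this)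

theorem gridPoint_gridIndex_le {x : ℝ} (hx : 0 ≤ x) : gridPoint N (gridIndex N x) ≤ x := by
  rw [gridPoint, div_le_iff₀ (by positivity)]
  exact Nat.floor_le (by positivity)

theorem dist_gridPoint_gridIndex_le {x : ℝ} (hx : 0 ≤ x) :
    dist x (gridPoint N (gridIndex N x)) ≤ 1 / (N + 1) := by
  have hlt : x * (N + 1) < gridIndex N x + 1 := Nat.lt_floor_add_one _
  rw [Real.dist_eq, abs_of_nonneg (sub_nonneg.2 (gridPoint_gridIndex_le hx)), gridPoint,
    sub_le_iff_le_add, ← add_div, le_div_iff₀ (by positivity)]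
  linarith

theorem gridPoint_gridIndex_mem {x : ℝ} (hx : x ∈ Icc 0 1) :
    gridPoint N (gridIndex N x) ∈ Icc 0 1 :=
  ⟨by unfold gridPoint; positivity, (gridPoint_gridIndex_le hx.1).trans hx.2⟩

theorem gridStep_apply {f : ℝ × ℝ → ℝ} {p : ℝ × ℝ} (hp : p ∈ Icc 0 1 ×ˢ Icc 0 1) :
    gridStep N f p = f (gridPoint N (gridIndex N p.1), gridPoint N (gridIndex N p.2)) := by
  have hmem : p ∈ gridCell N (gridIndex N p.1) ×ˢ gridCell N (gridIndex N p.2) :=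
    ⟨⟨hp.1, rfl⟩, ⟨hp.2, rfl⟩⟩
  rw [gridStep, Finset.sum_eq_single_of_mem (gridIndex N p.1, gridIndex N p.2)
    (Finset.mem_product.2 ⟨Finset.mem_range.2 (gridIndex_lt hp.1),
      Finset.mem_range.2 (gridIndex_lt hp.2)⟩), indicator_of_mem hmem]
  rintro k - hk
  refine indicator_of_notMem (fun hk' => hk ?_) _
  exact Prod.ext hk'.1.2.symm hk'.2.2.symm

theorem integrable_gridStep (ν : Measure (ℝ × ℝ)) [IsFiniteMeasure ν] (f : ℝ × ℝ → ℝ) :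
    Integrable (gridStep N f) ν :=
  integrable_finsetSum _ fun k _ =>
    (integrable_const _).indicator ((measurableSet_gridCell k.1).prod (measurableSet_gridCell k.2))

theorem integral_gridStep (ν : Measure (ℝ × ℝ)) [IsFiniteMeasure ν] (f : ℝ × ℝ → ℝ) :
    ∫ p, gridStep N f p ∂ν = gridSum N f ν := by
  unfold gridStep
  rw [integral_finsetSum _ fun (k : ℕ × ℕ) _ => (integrable_const _).indicator
    ((measurableSet_gridCell k.1).prod (measurableSet_gridCell k.2))]
  refine Finset.sum_congr rfl fun k _ => ?_
  rw [integral_indicator_const _ ((measurableSet_gridCell k.1).prod (measurableSet_gridCell k.2)),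
    smul_eq_mul, mul_comm]

theorem dist_integral_gridSum_le {ν : Measure (ℝ × ℝ)} [IsProbabilityMeasure ν]
    (hν : ∀ᵐ p ∂ν, p ∈ Icc 0 1 ×ˢ Icc 0 1) {f : ℝ × ℝ → ℝ}
    (hf : ContinuousOn f (Icc 0 1 ×ˢ Icc 0 1)) {ε δ : ℝ}
    (hfδ : ∀ p ∈ Icc 0 1 ×ˢ Icc 0 1, ∀ q ∈ Icc 0 1 ×ˢ Icc 0 1, dist p q ≤ δ → dist (f p) (f q) ≤ ε)
    (hN : 1 / ((N : ℝ) + 1) ≤ δ) :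
    dist (∫ p, f p ∂ν) (gridSum N f ν) ≤ ε := by
  have hfi : Integrable f ν := by
    have := hf.integrableOn_compact (μ := ν) (isCompact_Icc.prod isCompact_Icc)
    rwa [IntegrableOn, Measure.restrict_eq_self_of_ae_mem hν] at this
  have hclose : ∀ᵐ p ∂ν, ‖f p - gridStep N f p‖ ≤ ε := by
    filter_upwards [hν] with p hp
    rw [gridStep_apply hp, ← dist_eq_norm]
    refine hfδ p hp _ ⟨gridPoint_gridIndex_mem hp.1, gridPoint_gridIndex_mem hp.2⟩ ?_
    exact max_le ((dist_gridPoint_gridIndex_le hp.1.1).trans hN)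
      ((dist_gridPoint_gridIndex_le hp.2.1).trans hN)
  rw [← integral_gridStep, dist_eq_norm, ← integral_sub hfi (integrable_gridStep ν f)]
  simpa using norm_integral_le_of_norm_le_const hclose

end Grid

theorem tendsto_of_forall_dist_le {ι X : Type*} [PseudoMetricSpace X] {l : Filter ι}
    {x : ι → X} {L : X}
    (h : ∀ ε > 0, ∃ (a : ι → X) (L' : X), Tendsto a l (𝓝 L') ∧ (∀ i, dist (x i) (a i) ≤ ε) ∧
      dist L L' ≤ ε) :
    Tendsto x l (𝓝 L) := by
  refine Metric.tendsto_nhds.2 fun ε hε => ?_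
  obtain ⟨a, L', ha, hxa, hL⟩ := h (ε / 4) (by positivity)
  filter_upwards [Metric.tendsto_nhds.1 ha (ε / 4) (by positivity)] with i hi
  calc dist (x i) L ≤ dist (x i) (a i) + dist (a i) L' + dist L' L := dist_triangle4 _ _ _ _
    _ < ε := by linarith [hxa i, dist_comm L L']

theorem tendsto_integral_of_tendsto_measureReal_prod {ι : Type*} {l : Filter ι}
    {νs : ι → Measure (ℝ × ℝ)} {ν : Measure (ℝ × ℝ)} [∀ i, IsProbabilityMeasure (νs i)]
    [IsProbabilityMeasure ν] (hνs : ∀ i, ∀ᵐ p ∂νs i, p ∈ Icc 0 1 ×ˢ Icc 0 1)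
    (hν : ∀ᵐ p ∂ν, p ∈ Icc 0 1 ×ˢ Icc 0 1)
    (h : ∀ A B : Set ℝ, A ⊆ Icc 0 1 → B ⊆ Icc 0 1 → MeasurableSet A → MeasurableSet B →
      Tendsto (fun i => (νs i).real (A ×ˢ B)) l (𝓝 (ν.real (A ×ˢ B))))
    {f : ℝ × ℝ → ℝ} (hf : ContinuousOn f (Icc 0 1 ×ˢ Icc 0 1)) :
    Tendsto (fun i => ∫ p, f p ∂νs i) l (𝓝 (∫ p, f p ∂ν)) := by
  refine tendsto_of_forall_dist_le fun ε hε => ?_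
  obtain ⟨δ, hδ, hfδ⟩ := Metric.uniformContinuousOn_iff_le.1
    ((isCompact_Icc.prod isCompact_Icc).uniformContinuousOn_of_continuous hf) ε hε
  obtain ⟨N, hN⟩ := exists_nat_one_div_lt hδ
  refine ⟨fun i => gridSum N f (νs i), gridSum N f ν, ?_,
    fun i => dist_integral_gridSum_le (hνs i) hf hfδ hN.le,
    dist_integral_gridSum_le hν hf hfδ hN.le⟩
  exact tendsto_finsetSum _ fun k _ => (h _ _ inter_subset_left inter_subset_left
    (measurableSet_gridCell k.1) (measurableSet_gridCell k.2)).const_mul _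

/-- For probability measures `μ, μ₁, μ₂, …` on `[0,1]²` with both marginals
equal to Lebesgue measure, the following are equivalent:
(a) `∫ f dμₙ → ∫ f dμ` for all continuous `f` on the square;
(b) `μₙ(A × B) → μ(A × B)` for all Lebesgue-measurable `A, B ⊆ [0,1]`;
(c) `∫ f(x)g(y) μₙ(dx dy) → ∫ f(x)g(y) μ(dx dy)` for all `f, g ∈ L²[0,1]`. -/
theorem joinings_weak_convergence_tfae
    (μ : Measure (ℝ × ℝ)) (μs : ℕ → Measure (ℝ × ℝ))
    [IsProbabilityMeasure μ] [∀ n, IsProbabilityMeasure (μs n)]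
    (hμ1 : μ.map Prod.fst = volume.restrict (Set.Icc 0 1))
    (hμ2 : μ.map Prod.snd = volume.restrict (Set.Icc 0 1))
    (hμs1 : ∀ n, (μs n).map Prod.fst = volume.restrict (Set.Icc 0 1))
    (hμs2 : ∀ n, (μs n).map Prod.snd = volume.restrict (Set.Icc 0 1)) :
    List.TFAE
      [ (∀ f : ℝ × ℝ → ℝ, ContinuousOn f (Set.Icc 0 1 ×ˢ Set.Icc 0 1) →
          Tendsto (fun n => ∫ p, f p ∂(μs n)) atTop (nhds (∫ p, f p ∂μ))),
        (∀ A B : Set ℝ, A ⊆ Set.Icc 0 1 → B ⊆ Set.Icc 0 1 →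
          NullMeasurableSet A volume → NullMeasurableSet B volume →
          Tendsto (fun n => ((μs n) (A ×ˢ B)).toReal) atTop
            (nhds ((μ (A ×ˢ B)).toReal))),
        (∀ f g : ℝ → ℝ,
          MemLp f 2 (volume.restrict (Set.Icc 0 1)) →
          MemLp g 2 (volume.restrict (Set.Icc 0 1)) →
          Tendsto (fun n => ∫ p, f p.1 * g p.2 ∂(μs n)) atTop
            (nhds (∫ p, f p.1 * g p.2 ∂μ))) ] := by
  have hac : volume.restrict (Icc (0 : ℝ) 1) ≪ volume :=
    Measure.absolutelyContinuous_of_le Measure.restrict_le_self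
  have hsupp {ν : Measure (ℝ × ℝ)} (h1 : ν.map Prod.fst = volume.restrict (Icc 0 1))
      (h2 : ν.map Prod.snd = volume.restrict (Icc 0 1)) : ∀ᵐ p ∂ν, p ∈ Icc 0 1 ×ˢ Icc 0 1 :=
    ae_mem_prod_of_map_eq_restrict measurableSet_Icc measurableSet_Icc h1 h2
  tfae_have 1 → 3 := fun h _ _ hf hg =>
    tendsto_integral_mul_of_boundedContinuous hμs1 hμs2 hμ1 hμ2
      (fun f g => h _ (by fun_prop : Continuous fun p : ℝ × ℝ => f p.1 * g p.2).continuousOn) hf hg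
  tfae_have 3 → 2 := fun h _ _ _ _ hA hB =>
    tendsto_measureReal_prod_of_tendsto_integral_mul hμs1 hμs2 hμ1 hμ2 h
      (hA.mono_ac hac) (hB.mono_ac hac)
  tfae_have 2 → 1 := fun h _ hf =>
    tendsto_integral_of_tendsto_measureReal_prod (fun n => hsupp (hμs1 n) (hμs2 n)) (hsupp hμ1 hμ2)
      (fun A B hA hB hAm hBm => h A B hA hB hAm.nullMeasurableSet hBm.nullMeasurableSet) hf
  tfae_finish
end

section
/- Let $(\Omega,\mathcal{F},P)$ be a probability space and $\mathcal{F}_1, \mathcal{F}_2$ independent sub-$\sigma$-fields of $\mathcal{F}$. If $\mathcal{G}$ is a $\sigma$-field with $\mathcal{F}_1 \subset \mathcal{G} \subset \mathcal{F}$, $\mathcal{G}$ is independent of $\mathcal{F}_2$, and $\mathcal{F}_1 \vee \mathcal{F}_2 \supset \mathcal{G}$, then $\mathcal{G} = \mathcal{F}_1$ (mod null sets). -/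
set_option maxHeartbeats 1000000


open MeasureTheory ProbabilityTheory

private lemma indep_mono' {Ω : Type*} {m1 m2 m1' m2' : MeasurableSpace Ω}
    {m0 : MeasurableSpace Ω} {μ : Measure Ω}
    (h : Indep m1 m2 μ) (h1 : m1' ≤ m1) (h2 : m2' ≤ m2) : Indep m1' m2' μ := by
  rw [Indep_iff] at h ⊢
  exact fun t1 t2 ht1 ht2 => h t1 t2 (h1 _ ht1) (h2 _ ht2)

private lemma indepFun_of_measurable' {Ω : Type*} {m1 m2 : MeasurableSpace Ω}
    {m0 : MeasurableSpace Ω} {μ : Measure Ω} (h : Indep m1 m2 μ) {X Y : Ω → ℝ}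
    (hX : Measurable[m1] X) (hY : Measurable[m2] Y) :
    IndepFun X Y μ := by
  rw [IndepFun_iff_Indep]
  exact indep_mono' h hX.comap_le hY.comap_le

/-- If `𝓕₁ ⊆ 𝓖 ⊆ 𝓕`, `𝓕₁` and `𝓕₂` are independent, `𝓖` is independent of
`𝓕₂`, and `𝓖 ⊆ 𝓕₁ ∨ 𝓕₂`, then `𝓖 = 𝓕₁` mod null sets: every `𝓖`-measurable set
coincides up to a null set with an `𝓕₁`-measurable set. -/
theorem squeezed_sigma_field_eq {Ω : Type*} {m0 : MeasurableSpace Ω}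
    (μ : Measure Ω) [IsProbabilityMeasure μ]
    (m1 m2 mG : MeasurableSpace Ω)
    (hm1 : m1 ≤ m0) (hm2 : m2 ≤ m0) (hmG : mG ≤ m0)
    (h12 : Indep m1 m2 μ)
    (h1G : m1 ≤ mG)
    (hG2 : Indep mG m2 μ)
    (hGsub : mG ≤ m1 ⊔ m2) :
    ∀ A : Set Ω, MeasurableSet[mG] A →
      ∃ B : Set Ω, MeasurableSet[m1] B ∧ μ (symmDiff A B) = 0 := by
  intro A hA
  letI : MeasurableSpace Ω := m0
  have hm12 : m1 ⊔ m2 ≤ m0 := sup_le hm1 hm2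
  have hA0 : MeasurableSet[m0] A := hmG _ hA
  set f : Ω → ℝ := A.indicator (fun _ => 1) with hf_def
  have hfint : Integrable f μ := (integrable_const (1 : ℝ)).indicator hA0
  set g : Ω → ℝ := μ[f | m1] with hg_def
  have hgsm : StronglyMeasurable[m1] g := stronglyMeasurable_condExp
  have hgint : Integrable g μ := integrable_condExp
  -- the π-system of rectangles generating m1 ⊔ m2
  set S : Set (Set Ω) :=
    {s | ∃ t1 t2, MeasurableSet[m1] t1 ∧ MeasurableSet[m2] t2 ∧ s = t1 ∩ t2} with hS_def
  have h_eq : m1 ⊔ m2 = MeasurableSpace.generateFrom S := by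
    refine le_antisymm (sup_le ?_ ?_) (MeasurableSpace.generateFrom_le ?_)
    · exact fun s hs => MeasurableSpace.measurableSet_generateFrom
        ⟨s, Set.univ, hs, @MeasurableSet.univ Ω m2, (Set.inter_univ s).symm⟩
    · exact fun s hs => MeasurableSpace.measurableSet_generateFrom
        ⟨Set.univ, s, @MeasurableSet.univ Ω m1, hs, (Set.univ_inter s).symm⟩
    · rintro s ⟨t1, t2, ht1, ht2, rfl⟩
      exact MeasurableSet.inter ((le_sup_left : m1 ≤ m1 ⊔ m2) _ ht1)
        ((le_sup_right : m2 ≤ m1 ⊔ m2) _ ht2)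
  have h_pi : IsPiSystem S := by
    rintro s ⟨s1, s2, hs1, hs2, rfl⟩ t ⟨t1, t2, ht1, ht2, rfl⟩ -
    exact ⟨s1 ∩ t1, s2 ∩ t2, hs1.inter ht1, hs2.inter ht2, Set.inter_inter_inter_comm _ _ _ _⟩
  -- set integrals of g and f agree on all sets in m1 ⊔ m2
  have h_basic : ∀ t ∈ S, ∫ x in t, g x ∂μ = ∫ x in t, f x ∂μ := by
    rintro s ⟨t1, t2, ht1, ht2, rfl⟩
    have ht1' : MeasurableSet[m0] t1 := hm1 _ ht1
    have ht2' : MeasurableSet[m0] t2 := hm2 _ ht2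
    set X : Ω → ℝ := t1.indicator g with hX_def
    set Y : Ω → ℝ := t2.indicator (fun _ => 1) with hY_def
    have hXmeas : Measurable[m1] X := (hgsm.measurable).indicator ht1
    have hYmeas : Measurable[m2] Y := measurable_const.indicator ht2
    have hXY : IndepFun X Y μ := indepFun_of_measurable' h12 hXmeas hYmeas
    have hXint : Integrable X μ := hgint.indicator ht1'
    have hYint : Integrable Y μ := (integrable_const (1 : ℝ)).indicator ht2'
    have hmul : ∀ x, (t1 ∩ t2).indicator g x = X x * Y x := by
      intro x
      by_cases h1 : x ∈ t1 <;> by_cases h2 : x ∈ t2 <;>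
        simp [hX_def, hY_def, Set.indicator_apply, h1, h2]
    have hint_f : ∀ t : Set Ω, MeasurableSet[m0] t → ∫ x in t, f x ∂μ = (μ (A ∩ t)).toReal := by
      intro t ht
      rw [hf_def, setIntegral_indicator hA0, setIntegral_const, smul_eq_mul, mul_one, Set.inter_comm, measureReal_def]
    calc ∫ x in t1 ∩ t2, g x ∂μ = ∫ x, (t1 ∩ t2).indicator g x ∂μ := by
          rw [integral_indicator (ht1'.inter ht2')]
      _ = ∫ x, X x * Y x ∂μ := by simp_rw [hmul]
      _ = (∫ x, X x ∂μ) * ∫ x, Y x ∂μ := hXY.integral_mul_eq_mul_integral hXint.aestronglyMeasurable hYint.aestronglyMeasurable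
      _ = (∫ x in t1, g x ∂μ) * ∫ x in t2, (1 : ℝ) ∂μ := by
          rw [hX_def, hY_def, integral_indicator ht1', integral_indicator ht2']
      _ = (μ (A ∩ t1)).toReal * (μ t2).toReal := by
          rw [setIntegral_condExp hm1 hfint ht1, hint_f t1 ht1', setIntegral_const,
            smul_eq_mul, mul_one, measureReal_def]
      _ = (μ (A ∩ t1) * μ t2).toReal := (ENNReal.toReal_mul).symm
      _ = (μ ((A ∩ t1) ∩ t2)).toReal := by
          rw [(Indep_iff _ _ _).mp hG2 (A ∩ t1) t2 (hA.inter (h1G _ ht1)) ht2]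
      _ = (μ (A ∩ (t1 ∩ t2))).toReal := by rw [Set.inter_assoc]
      _ = ∫ x in t1 ∩ t2, f x ∂μ := (hint_f _ (ht1'.inter ht2')).symm
  have h_all : ∀ s : Set Ω, MeasurableSet[m1 ⊔ m2] s →
      ∫ x in s, g x ∂μ = ∫ x in s, f x ∂μ := by
    intro s hs
    refine MeasurableSpace.induction_on_inter (m := m1 ⊔ m2)
      (C := fun t _ => ∫ x in t, g x ∂μ = ∫ x in t, f x ∂μ) (s := S)
      h_eq h_pi (by simp) h_basic ?_ ?_ s hs
    · intro t ht hC
      have ht' : MeasurableSet[m0] t := hm12 _ ht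
      have hgu := integral_add_compl ht' hgint
      have hfu := integral_add_compl ht' hfint
      have huniv : ∫ x, g x ∂μ = ∫ x, f x ∂μ := integral_condExp hm1
      linarith
    · intro u hdisj humeas hC
      have humeas' : ∀ i, MeasurableSet[m0] (u i) := fun i => hm12 _ (humeas i)
      rw [integral_iUnion humeas' hdisj hgint.integrableOn,
        integral_iUnion humeas' hdisj hfint.integrableOn]
      exact tsum_congr hC
  -- conclude g =ᵐ f
  have hkey : f =ᵐ[μ] g := by
    have h1 : μ[f | m1 ⊔ m2] =ᵐ[μ] f := by
      rw [condExp_of_stronglyMeasurable hm12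
        ((stronglyMeasurable_const.indicator (hGsub A hA)) :
          StronglyMeasurable[m1 ⊔ m2] f) hfint]
    have h2 : g =ᵐ[μ] μ[f | m1 ⊔ m2] := by
      refine ae_eq_condExp_of_forall_setIntegral_eq hm12 hfint
        (fun s _ _ => hgint.integrableOn) (fun s hs _ => h_all s hs) ?_
      exact (hgsm.mono (le_sup_left : m1 ≤ m1 ⊔ m2)).aestronglyMeasurable (μ := μ)
    exact (h2.trans h1).symm
  refine ⟨g ⁻¹' {1}, hgsm.measurable (measurableSet_singleton 1), ?_⟩
  have hsub : symmDiff A (g ⁻¹' {1}) ⊆ {x | f x ≠ g x} := by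
    intro x hx
    rcases Set.mem_symmDiff.mp hx with ⟨hxA, hxB⟩ | ⟨hxB, hxA⟩
    · simp only [Set.mem_preimage, Set.mem_singleton_iff] at hxB
      simp only [Set.mem_setOf_eq, hf_def, Set.indicator_of_mem hxA]
      exact fun h => hxB h.symm
    · simp only [Set.mem_preimage, Set.mem_singleton_iff] at hxB
      simp [hf_def, Set.indicator_of_notMem hxA, hxB]
  exact measure_mono_null hsub (ae_iff.mp hkey)
end
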